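/- Let H = (V, E, w) be an undirected hypergraph with π(i) = ∑_{e ∋ i} w(e). Then the reweighted eigenvalue program with ℓ₂² triangle inequalities λ^Δ_π(H) is a relaxation up to constants: λ^Δ_π(H) ≤ 2·φ_π(H), where φ_π(H) is the hypergraph conductance min over nonempty S ⊂ V of w(δ(S))/min{π(S), π(V∖S)} with δ(S) the set of hyperedges crossing S. -/

import Mathlib

/-! The cut vector of `S`, taking one value `c` on `S` and another value `d` on its complement, is
feasible once it is centred and normalised, which forces
`(c - d)² = 1/π(S) + 1/π(Sᶜ) ≤ 2 / min (π(S), π(Sᶜ))`; its squared distances form a cut semimetric,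
so the `ℓ₂²` triangle inequalities hold. Against any circulation, only hyperedges crossing `S` carry
flow between points at distance `c - d`, each of them at most `w(e)`, so the objective is at most
`½ w(δ(S)) (c - d)² ≤ φ_π(S)`. -/

open Finset

section CutFunction

variable {V : Type*} [DecidableEq V]

def cutFunction (S : Finset V) (c d : ℝ) (i : V) : ℝ := if i ∈ S then c else d

variable (S : Finset V) (c d : ℝ)

theorem sq_sub_cutFunction_le (i j : V) :
    (cutFunction S c d i - cutFunction S c d j) ^ 2 ≤ (c - d) ^ 2 := by
  unfold cutFunction
  split_ifs <;> nlinarith [sq_nonneg (c - d)]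

theorem sq_sub_cutFunction_le_add (i j k : V) :
    (cutFunction S c d i - cutFunction S c d k) ^ 2 ≤
      (cutFunction S c d i - cutFunction S c d j) ^ 2 +
        (cutFunction S c d j - cutFunction S c d k) ^ 2 := by
  unfold cutFunction
  split_ifs <;> nlinarith [sq_nonneg (c - d)]

variable [Fintype V]

theorem sum_mul_comp_cutFunction (f : V → ℝ) (g : ℝ → ℝ) :
    ∑ i, f i * g (cutFunction S c d i) = (∑ i ∈ S, f i) * g c + (∑ i ∈ Sᶜ, f i) * g d := by
  rw [← sum_add_sum_compl S, sum_mul, sum_mul]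
  congr 1 <;> refine sum_congr rfl fun i hi => ?_ <;> simp_all [cutFunction]

theorem cutFunction_eq_of_not_crossing {e : Finset V}
    (he : ¬((e ∩ S).Nonempty ∧ (e ∩ Sᶜ).Nonempty)) {i j : V} (hi : i ∈ e) (hj : j ∈ e) :
    cutFunction S c d i = cutFunction S c d j := by
  by_cases hiS : i ∈ S <;> by_cases hjS : j ∈ S <;> simp only [cutFunction, hiS, hjS, if_true,
    if_false]
  · exact absurd ⟨⟨i, mem_inter.2 ⟨hi, hiS⟩⟩, ⟨j, mem_inter.2 ⟨hj, mem_compl.2 hjS⟩⟩⟩ he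
  · exact absurd ⟨⟨j, mem_inter.2 ⟨hj, hjS⟩⟩, ⟨i, mem_inter.2 ⟨hi, mem_compl.2 hiS⟩⟩⟩ he

end CutFunction

theorem exists_centered_normalized_two_point {a b : ℝ} (ha : 0 < a) (hb : 0 < b) :
    ∃ c d : ℝ, a * c + b * d = 0 ∧ a * c ^ 2 + b * d ^ 2 = 1 ∧ (c - d) ^ 2 = 1 / a + 1 / b := by
  set t := (Real.sqrt (a * b * (a + b)))⁻¹
  have ht : t ^ 2 = (a * b * (a + b))⁻¹ := by rw [inv_pow, Real.sq_sqrt (by positivity)]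
  refine ⟨b * t, -(a * t), by ring, ?_, ?_⟩
  · calc a * (b * t) ^ 2 + b * (-(a * t)) ^ 2 = a * b * (a + b) * t ^ 2 := by ring
      _ = 1 := by rw [ht]; field_simp
  · calc (b * t - -(a * t)) ^ 2 = (a + b) ^ 2 * t ^ 2 := by ring
      _ = 1 / a + 1 / b := by rw [ht]; field_simp; ring

theorem one_div_add_one_div_le_two_div_min {a b : ℝ} (ha : 0 < a) (hb : 0 < b) :
    1 / a + 1 / b ≤ 2 / min a b := by
  have hmin : 0 < min a b := lt_min ha hb
  have h₁ : 1 / a ≤ 1 / min a b := one_div_le_one_div_of_le hmin (min_le_left a b)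
  have h₂ : 1 / b ≤ 1 / min a b := one_div_le_one_div_of_le hmin (min_le_right a b)
  linarith [show 2 / min a b = 1 / min a b + 1 / min a b by ring]

theorem sum_sum_flow_add_flow_swap_mul {V : Type*} [Fintype V] (E : Finset (Finset V))
    (Fe : Finset V → V → V → ℝ) (D : V → V → ℝ) (hD : ∀ i j, D i j = D j i) :
    ∑ i, ∑ j, ((∑ e ∈ E, Fe e i j) + ∑ e ∈ E, Fe e j i) * D i j =
      2 * ∑ e ∈ E, ∑ i, ∑ j, Fe e i j * D i j := by
  have hswap :
      ∑ i, ∑ j, (∑ e ∈ E, Fe e j i) * D i j = ∑ i, ∑ j, (∑ e ∈ E, Fe e i j) * D i j := by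
    rw [Finset.sum_comm]
    simp_rw [hD]
  have hpull :
      ∑ i, ∑ j, (∑ e ∈ E, Fe e i j) * D i j = ∑ e ∈ E, ∑ i, ∑ j, Fe e i j * D i j := by
    simp_rw [sum_mul]
    exact (sum_congr rfl fun _ _ => Finset.sum_comm).trans Finset.sum_comm
  simp_rw [add_mul, sum_add_distrib]
  rw [hswap, hpull, two_mul]

theorem sum_flow_mul_sq_sub_cutFunction_le {V : Type*} [Fintype V] [DecidableEq V]
    (E : Finset (Finset V)) (w : Finset V → ℝ) (Fe : Finset V → V → V → ℝ)
    (hF0 : ∀ e i j, 0 ≤ Fe e i j)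
    (hFsupp : ∀ e ∈ E, ∀ i j : V, (i ∉ e ∨ j ∉ e) → Fe e i j = 0)
    (hFcap : ∀ e ∈ E, ∑ i, ∑ j, Fe e i j ≤ w e) (S : Finset V) (c d : ℝ) :
    ∑ e ∈ E, ∑ i, ∑ j, Fe e i j * (cutFunction S c d i - cutFunction S c d j) ^ 2 ≤
      (∑ e ∈ E.filter (fun e => (e ∩ S).Nonempty ∧ (e ∩ Sᶜ).Nonempty), w e) * (c - d) ^ 2 := by
  have hzero : ∀ e ∈ E, ¬((e ∩ S).Nonempty ∧ (e ∩ Sᶜ).Nonempty) →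
      ∑ i, ∑ j, Fe e i j * (cutFunction S c d i - cutFunction S c d j) ^ 2 = 0 := by
    intro e he hcross
    refine sum_eq_zero fun i _ => sum_eq_zero fun j _ => ?_
    by_cases hij : i ∈ e ∧ j ∈ e
    · rw [cutFunction_eq_of_not_crossing S c d hcross hij.1 hij.2, sub_self]
      ring
    · rw [hFsupp e he i j (not_and_or.1 hij), zero_mul]
  rw [← sum_filter_of_ne fun e he hne => not_not.1 fun h => hne (hzero e he h), sum_mul]
  refine sum_le_sum fun e he => ?_
  calc ∑ i, ∑ j, Fe e i j * (cutFunction S c d i - cutFunction S c d j) ^ 2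
      ≤ ∑ i, ∑ j, Fe e i j * (c - d) ^ 2 :=
        sum_le_sum fun i _ => sum_le_sum fun j _ =>
          mul_le_mul_of_nonneg_left (sq_sub_cutFunction_le S c d i j) (hF0 e i j)
    _ ≤ w e * (c - d) ^ 2 := by
        simp_rw [← sum_mul]
        exact mul_le_mul_of_nonneg_right (hFcap e (mem_filter.1 he).1) (sq_nonneg _)

theorem stmt_13_general {V : Type*} [Fintype V] [DecidableEq V]
    (E : Finset (Finset V)) (w : Finset V → ℝ)
    (π : V → ℝ)
    (hπ : ∀ i, 0 < π i)
    (S : Finset V) (hS : S.Nonempty) (hS' : S ≠ Finset.univ) :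
    ∃ (m : ℕ) (v : V → EuclideanSpace ℝ (Fin m)),
      (∑ i, π i • v i = 0) ∧
      (∑ i, π i * ‖v i‖ ^ 2 = 1) ∧
      (∀ i j k, ‖v i - v k‖ ^ 2 ≤ ‖v i - v j‖ ^ 2 + ‖v j - v k‖ ^ 2) ∧
      ∀ Fe : Finset V → V → V → ℝ,
        (∀ e i j, 0 ≤ Fe e i j) →
        (∀ e ∈ E, ∀ i j : V, (i ∉ e ∨ j ∉ e) → Fe e i j = 0) →
        (∀ e ∈ E, ∑ i, ∑ j, Fe e i j ≤ w e) →
        (∀ j, ∑ i, ∑ e ∈ E, Fe e i j = ∑ k, ∑ e ∈ E, Fe e j k) →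
        (1 / 4) * ∑ i, ∑ j,
            ((∑ e ∈ E, Fe e i j) + ∑ e ∈ E, Fe e j i) * ‖v i - v j‖ ^ 2 ≤
          2 * ((∑ e ∈ E.filter
                  (fun e => (e ∩ S).Nonempty ∧ (e ∩ Sᶜ).Nonempty), w e) /
            min (∑ i ∈ S, π i) (∑ i ∈ Sᶜ, π i)) := by
  have ha : 0 < ∑ i ∈ S, π i := sum_pos (fun i _ => hπ i) hS
  have hb : 0 < ∑ i ∈ Sᶜ, π i := sum_pos (fun i _ => hπ i) (by
    rwa [nonempty_iff_ne_empty, Ne, compl_eq_empty_iff])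
  obtain ⟨c, d, hcenter, hnorm, hgap⟩ := exists_centered_normalized_two_point ha hb
  set x := cutFunction S c d
  set u : EuclideanSpace ℝ (Fin 1) := EuclideanSpace.single 0 1
  have hnorm_smul : ∀ t : ℝ, ‖t • u‖ = |t| := fun t => by simp [u, norm_smul]
  have hdist : ∀ i j, ‖x i • u - x j • u‖ ^ 2 = (x i - x j) ^ 2 := fun i j => by
    rw [← sub_smul, hnorm_smul, sq_abs]
  refine ⟨1, fun i => x i • u, ?_, ?_, ?_, ?_⟩
  · simp_rw [smul_smul, ← sum_smul]
    rw [(sum_mul_comp_cutFunction S c d π fun t => t).trans hcenter, zero_smul]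
  · simp_rw [hnorm_smul, sq_abs]
    exact (sum_mul_comp_cutFunction S c d π fun t => t ^ 2).trans hnorm
  · simpa only [hdist] using sq_sub_cutFunction_le_add S c d
  · intro Fe hF0 hFsupp hFcap _
    set W := ∑ e ∈ E.filter (fun e => (e ∩ S).Nonempty ∧ (e ∩ Sᶜ).Nonempty), w e
    have hW : 0 ≤ W :=
      sum_nonneg fun e he => (sum_nonneg fun i _ => sum_nonneg fun j _ => hF0 e i j).trans
        (hFcap e (mem_filter.1 he).1)
    have henergy := sum_flow_mul_sq_sub_cutFunction_le E w Fe hF0 hFsupp hFcap S c d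
    rw [hgap] at henergy
    have hmin := one_div_add_one_div_le_two_div_min ha hb
    simp only [hdist]
    rw [sum_sum_flow_add_flow_swap_mul E Fe _ fun i j => by ring]
    calc _ ≤ 1 / 2 * (W * (2 / min (∑ i ∈ S, π i) (∑ i ∈ Sᶜ, π i))) := by
          linarith [mul_le_mul_of_nonneg_left hmin hW]
      _ = W / min (∑ i ∈ S, π i) (∑ i ∈ Sᶜ, π i) := by ring
      _ ≤ _ := by linarith [div_nonneg hW (lt_min ha hb).le]

/-- Easy direction for hypergraphs: for an undirected hypergraph
`H = (V, E, w)` with `π(i) = ∑_{e ∋ i} w(e)`, the reweighted eigenvalue program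
with ℓ₂² triangle inequalities is a relaxation up to constants:
`λ^Δ_π(H) ≤ 2·φ_π(H)`.  Formally: for every nonempty proper `S ⊂ V` there is a
feasible embedding whose objective against every feasible edge-constrained
circulation is at most `2·φ_π(S)`. -/
theorem stmt_13 {V : Type*} [Fintype V] [DecidableEq V]
    (E : Finset (Finset V)) (w : Finset V → ℝ) (hw : ∀ e ∈ E, 0 < w e)
    (π : V → ℝ) (hπdef : ∀ i, π i = ∑ e ∈ E.filter (fun e => i ∈ e), w e)
    (hπ : ∀ i, 0 < π i)
    (S : Finset V) (hS : S.Nonempty) (hS' : S ≠ Finset.univ) :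
    ∃ (m : ℕ) (v : V → EuclideanSpace ℝ (Fin m)),
      (∑ i, π i • v i = 0) ∧
      (∑ i, π i * ‖v i‖ ^ 2 = 1) ∧
      (∀ i j k, ‖v i - v k‖ ^ 2 ≤ ‖v i - v j‖ ^ 2 + ‖v j - v k‖ ^ 2) ∧
      ∀ Fe : Finset V → V → V → ℝ,
        (∀ e i j, 0 ≤ Fe e i j) →
        (∀ e ∈ E, ∀ i j : V, (i ∉ e ∨ j ∉ e) → Fe e i j = 0) →
        (∀ e ∈ E, ∑ i, ∑ j, Fe e i j ≤ w e) →
        (∀ j, ∑ i, ∑ e ∈ E, Fe e i j = ∑ k, ∑ e ∈ E, Fe e j k) →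
        (1 / 4) * ∑ i, ∑ j,
            ((∑ e ∈ E, Fe e i j) + ∑ e ∈ E, Fe e j i) * ‖v i - v j‖ ^ 2 ≤
          2 * ((∑ e ∈ E.filter
                  (fun e => (e ∩ S).Nonempty ∧ (e ∩ Sᶜ).Nonempty), w e) /
            min (∑ i ∈ S, π i) (∑ i ∈ Sᶜ, π i)) :=
  stmt_13_general E w π hπ S hS hS'
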